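/- There is a constant C such that for every ε > 0, sup_{t>0} sup_{x∈[0,1]} ∫₀^t ∫₀¹ |G_{t+ε−s}(x,y) − G_{t−s}(x,y)| dy ds ≤ C·√ε, where G is the Dirichlet heat kernel on [0,1]. -/

import Mathlib

open Real MeasureTheory intervalIntegral

/-- The Dirichlet heat kernel for `∂ₜu = (1/2)u''` on `[0,1]`. -/
noncomputable def G (t x y : ℝ) : ℝ :=
  2 * ∑' n : ℕ, Real.sin (((n : ℝ) + 1) * Real.pi * x) *
    Real.sin (((n : ℝ) + 1) * Real.pi * y) *
    Real.exp (-((n : ℝ) + 1) ^ 2 * Real.pi ^ 2 * t / 2)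

/-!
Write `λₙ = (n+1)²π²/2`. For `0 < u ≤ v`, bounding each sine by one gives
`|G v x y - G u x y| ≤ 2 ∑ₙ (e^{-λₙ u} - e^{-λₙ v})` uniformly in `x, y`. Integrating the `n`-th
term over `s ∈ (0, t)` with `u = t - s`, `v = t + ε - s` gives
`(1 - e^{-λₙ t})(1 - e^{-λₙ ε}) / λₙ ≤ min (1/λₙ) ε ≤ min ((n+1)⁻²) ε`, and
`∑ₙ min ((n+1)⁻², ε) ≤ 3√ε` by splitting the series at `n ≈ ε^{-1/2}`. The terms being
nonnegative, exchanging `∑ₙ` and `∫ ds` is monotone convergence.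
-/

theorem norm_integral_le_tsum_of_integral_le {α E : Type*} [MeasurableSpace α] {μ : Measure α}
    [NormedAddCommGroup E] [NormedSpace ℝ E] {f : α → E} {g : ℕ → α → ℝ} {b : ℕ → ℝ}
    (hg : ∀ n, Integrable (g n) μ) (hg_nonneg : ∀ n a, 0 ≤ g n a)
    (hgb : ∀ n, ∫ a, g n a ∂μ ≤ b n) (hb : Summable b) (hfg : ∀ᵐ a ∂μ, ‖f a‖ ≤ ∑' n, g n a) :
    ‖∫ a, f a ∂μ‖ ≤ ∑' n, b n := by
  have hg_sum : Summable fun n => ∫ a, g n a ∂μ :=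
    hb.of_nonneg_of_le (fun n => integral_nonneg (hg_nonneg n)) hgb
  have hpointwise : ∀ᵐ a ∂μ, ‖f a‖ₑ ≤ ∑' n, ENNReal.ofReal (g n a) := by
    filter_upwards [hfg] with a ha
    rw [← ofReal_norm]
    by_cases hs : Summable fun n => g n a
    · rw [← ENNReal.ofReal_tsum_of_nonneg (fun n => hg_nonneg n a) hs]
      exact ENNReal.ofReal_le_ofReal ha
    · rw [tsum_eq_zero_of_not_summable hs] at ha
      simp [ENNReal.ofReal_eq_zero.mpr ha]
  have hlint : ‖∫ a, f a ∂μ‖ₑ ≤ ENNReal.ofReal (∑' n, ∫ a, g n a ∂μ) :=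
    calc ‖∫ a, f a ∂μ‖ₑ ≤ ∫⁻ a, ‖f a‖ₑ ∂μ := enorm_integral_le_lintegral_enorm f
      _ ≤ ∫⁻ a, ∑' n, ENNReal.ofReal (g n a) ∂μ := lintegral_mono_ae hpointwise
      _ = ∑' n, ∫⁻ a, ENNReal.ofReal (g n a) ∂μ :=
          lintegral_tsum fun n => (hg n).aemeasurable.ennreal_ofReal
      _ = ∑' n, ENNReal.ofReal (∫ a, g n a ∂μ) := tsum_congr fun n =>
          (ofReal_integral_eq_lintegral_ofReal (hg n) (.of_forall (hg_nonneg n))).symm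
      _ = ENNReal.ofReal (∑' n, ∫ a, g n a ∂μ) :=
          (ENNReal.ofReal_tsum_of_nonneg (fun n => integral_nonneg (hg_nonneg n)) hg_sum).symm
  rw [← ofReal_norm] at hlint
  calc ‖∫ a, f a ∂μ‖ ≤ ∑' n, ∫ a, g n a ∂μ :=
        (ENNReal.ofReal_le_ofReal_iff (tsum_nonneg fun n => integral_nonneg (hg_nonneg n))).mp hlint
    _ ≤ ∑' n, b n := hg_sum.tsum_le_tsum hgb hb

lemma integral_exp_neg_mul_sub (L t : ℝ) (hL : L ≠ 0) :
    ∫ s in (0 : ℝ)..t, exp (-L * (t - s)) = (1 - exp (-L * t)) / L := by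
  have hderiv : ∀ s ∈ Set.uIcc 0 t,
      HasDerivAt (fun s => exp (-L * (t - s)) / L) (exp (-L * (t - s))) s := fun s _ => by
    refine ((((hasDerivAt_id s).const_sub t).const_mul (-L)).exp.div_const L).congr_deriv ?_
    simp only [id]
    field_simp
  rw [integral_eq_sub_of_hasDerivAt hderiv (Continuous.intervalIntegrable (by fun_prop) _ _)]
  simp only [sub_self, mul_zero, exp_zero, sub_zero]
  ring

lemma integral_exp_neg_mul_increment (L t ε : ℝ) (hL : L ≠ 0) :
    ∫ s in (0 : ℝ)..t, (exp (-L * (t - s)) - exp (-L * (t + ε - s))) =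
      (1 - exp (-L * t)) * (1 - exp (-L * ε)) / L := by
  have hsplit : ∀ s, exp (-L * (t - s)) - exp (-L * (t + ε - s)) =
      (1 - exp (-L * ε)) * exp (-L * (t - s)) := fun s => by
    rw [sub_mul, one_mul, ← exp_add]; ring_nf
  simp_rw [hsplit, intervalIntegral.integral_const_mul, integral_exp_neg_mul_sub L t hL]
  ring

lemma one_sub_exp_neg_mul_one_sub_exp_neg_div_le {L t ε : ℝ} (hL : 0 < L) (ht : 0 ≤ t)
    (hε : 0 ≤ ε) : (1 - exp (-L * t)) * (1 - exp (-L * ε)) / L ≤ min L⁻¹ ε := by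
  have ht0 : 0 ≤ 1 - exp (-L * t) := sub_nonneg.mpr <| exp_le_one_iff.mpr <| by nlinarith
  have ht1 : 1 - exp (-L * t) ≤ 1 := by linarith [exp_pos (-L * t)]
  have hε0 : 0 ≤ 1 - exp (-L * ε) := sub_nonneg.mpr <| exp_le_one_iff.mpr <| by nlinarith
  have hε1 : 1 - exp (-L * ε) ≤ 1 := by linarith [exp_pos (-L * ε)]
  have hε_lin : 1 - exp (-L * ε) ≤ L * ε := by linarith [add_one_le_exp (-L * ε)]
  rw [le_min_iff, div_le_iff₀ hL, div_le_iff₀ hL, inv_mul_cancel₀ hL.ne']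
  constructor <;> nlinarith

lemma summable_inv_succ_sq : Summable fun n : ℕ => (((n : ℝ) + 1) ^ 2)⁻¹ := by
  simpa using (summable_nat_add_iff 1).mpr (Real.summable_nat_pow_inv.mpr one_lt_two)

lemma tsum_inv_sq_nat_add_le (N : ℕ) :
    ∑' k : ℕ, ((((k + N : ℕ) : ℝ) + 1) ^ 2)⁻¹ ≤ 2 / ((N : ℝ) + 1) := by
  refine Real.tsum_le_of_sum_range_le (fun _ => by positivity) fun K => ?_
  calc ∑ k ∈ Finset.range K, ((((k + N : ℕ) : ℝ) + 1) ^ 2)⁻¹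
      = ∑ i ∈ Finset.Ioo N (N + 1 + K), ((i : ℝ) ^ 2)⁻¹ := by
        rw [← Finset.Ico_add_one_left_eq_Ioo, Finset.sum_Ico_eq_sum_range,
          Nat.add_sub_cancel_left]
        refine Finset.sum_congr rfl fun k _ => ?_
        push_cast; ring_nf
    _ ≤ 2 / ((N : ℝ) + 1) := sum_Ioo_inv_sq_le N _

lemma summable_min_inv_succ_sq {ε : ℝ} (hε : 0 ≤ ε) :
    Summable fun n : ℕ => min (((n : ℝ) + 1) ^ 2)⁻¹ ε :=
  summable_inv_succ_sq.of_nonneg_of_le (fun _ => le_min (by positivity) hε) fun _ => min_le_left _ _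

lemma tsum_min_inv_succ_sq_le {ε : ℝ} (hε : 0 < ε) :
    ∑' n : ℕ, min (((n : ℝ) + 1) ^ 2)⁻¹ ε ≤ 3 * √ε := by
  have hsum := summable_min_inv_succ_sq hε.le
  have hsqrt : 0 < √ε := Real.sqrt_pos.mpr hε
  set N := ⌊(√ε)⁻¹⌋₊
  have head : ∑ n ∈ Finset.range N, min (((n : ℝ) + 1) ^ 2)⁻¹ ε ≤ √ε :=
    calc ∑ n ∈ Finset.range N, min (((n : ℝ) + 1) ^ 2)⁻¹ ε ≤ N * ε := by
          simpa using Finset.sum_le_sum fun n (_ : n ∈ Finset.range N) => min_le_right _ ε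
      _ ≤ (√ε)⁻¹ * ε := by gcongr; exact Nat.floor_le (by positivity)
      _ = √ε := by rw [inv_mul_eq_div, Real.div_sqrt]
  have tail : ∑' k : ℕ, min ((((k + N : ℕ) : ℝ) + 1) ^ 2)⁻¹ ε ≤ 2 * √ε :=
    calc ∑' k : ℕ, min ((((k + N : ℕ) : ℝ) + 1) ^ 2)⁻¹ ε
        ≤ ∑' k : ℕ, ((((k + N : ℕ) : ℝ) + 1) ^ 2)⁻¹ :=
          Summable.tsum_le_tsum (fun _ => min_le_left _ _)
            (hsum.comp_injective (add_left_injective N))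
            (summable_inv_succ_sq.comp_injective (add_left_injective N))
      _ ≤ 2 / ((N : ℝ) + 1) := tsum_inv_sq_nat_add_le N
      _ ≤ 2 * √ε := by
          have hN : (√ε)⁻¹ ≤ N + 1 := (Nat.lt_floor_add_one _).le
          rw [div_le_iff₀ (by positivity)]
          nlinarith [mul_inv_cancel₀ hsqrt.ne']
  rw [← hsum.sum_add_tsum_nat_add N]
  linarith

noncomputable def dirichletEigenvalue (n : ℕ) : ℝ := ((n : ℝ) + 1) ^ 2 * π ^ 2 / 2

lemma sq_le_dirichletEigenvalue (n : ℕ) : ((n : ℝ) + 1) ^ 2 ≤ dirichletEigenvalue n := by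
  have : (2 : ℝ) ≤ π ^ 2 := by nlinarith [pi_gt_three]
  unfold dirichletEigenvalue
  nlinarith [sq_nonneg ((n : ℝ) + 1)]

lemma dirichletEigenvalue_pos (n : ℕ) : 0 < dirichletEigenvalue n :=
  (by positivity : (0 : ℝ) < ((n : ℝ) + 1) ^ 2).trans_le (sq_le_dirichletEigenvalue n)

lemma antitone_exp_neg_dirichletEigenvalue_mul (n : ℕ) :
    Antitone fun u => exp (-dirichletEigenvalue n * u) := fun u v huv =>
  exp_le_exp.mpr <| by nlinarith [dirichletEigenvalue_pos n]

lemma summable_exp_neg_dirichletEigenvalue_mul {u : ℝ} (hu : 0 < u) :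
    Summable fun n : ℕ => exp (-dirichletEigenvalue n * u) := by
  refine (summable_exp_nat_mul_of_ge (c := -(π ^ 2 * u / 2)) (neg_lt_zero.mpr (by positivity))
    (f := fun n : ℕ => ((n : ℝ) + 1) ^ 2) fun n => by nlinarith).congr fun n => ?_
  unfold dirichletEigenvalue
  ring_nf

lemma G_eq_tsum (t x y : ℝ) : G t x y = 2 * ∑' n : ℕ, sin (((n : ℝ) + 1) * π * x) *
    sin (((n : ℝ) + 1) * π * y) * exp (-dirichletEigenvalue n * t) := by
  unfold G dirichletEigenvalue
  congr 2 with n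
  ring_nf

lemma abs_G_sub_le (x y : ℝ) {u v : ℝ} (hu : 0 < u) (huv : u ≤ v) :
    |G v x y - G u x y| ≤
      2 * ∑' n : ℕ, (exp (-dirichletEigenvalue n * u) - exp (-dirichletEigenvalue n * v)) := by
  set a : ℕ → ℝ := fun n => sin (((n : ℝ) + 1) * π * x) * sin (((n : ℝ) + 1) * π * y)
  have ha : ∀ n, |a n| ≤ 1 := fun n => by
    rw [abs_mul]; exact mul_le_one₀ (abs_sin_le_one _) (abs_nonneg _) (abs_sin_le_one _)
  have hdecay n := antitone_exp_neg_dirichletEigenvalue_mul n huv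
  have hsu := summable_exp_neg_dirichletEigenvalue_mul hu
  have hsv := summable_exp_neg_dirichletEigenvalue_mul (hu.trans_le huv)
  have hmode : ∀ {w : ℝ}, Summable (fun n : ℕ => exp (-dirichletEigenvalue n * w)) →
      Summable fun n => a n * exp (-dirichletEigenvalue n * w) := fun hs =>
    hs.of_norm_bounded fun n => by
      rw [Real.norm_eq_abs, abs_mul, abs_exp]
      exact mul_le_of_le_one_left (exp_pos _).le (ha n)
  rw [G_eq_tsum, G_eq_tsum, ← mul_sub, ← (hmode hsv).tsum_sub (hmode hsu), abs_mul, abs_two]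
  gcongr
  rw [← Real.norm_eq_abs]
  refine tsum_of_norm_bounded (hsu.sub hsv).hasSum fun n => ?_
  rw [Real.norm_eq_abs, ← mul_sub, abs_mul, abs_sub_comm,
    abs_of_nonneg (sub_nonneg.mpr (hdecay n))]
  exact mul_le_of_le_one_left (sub_nonneg.mpr (hdecay n)) (ha n)

lemma norm_integral_abs_G_sub_le (x : ℝ) {u v : ℝ} (hu : 0 < u) (huv : u ≤ v) :
    ‖∫ y in (0 : ℝ)..1, |G v x y - G u x y|‖ ≤
      ∑' n : ℕ, 2 * (exp (-dirichletEigenvalue n * u) - exp (-dirichletEigenvalue n * v)) := by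
  have hbound := intervalIntegral.norm_integral_le_of_norm_le_const (a := 0) (b := 1)
    (f := fun y => |G v x y - G u x y|) fun y _ => by
      rw [norm_abs_eq_norm, Real.norm_eq_abs]
      exact abs_G_sub_le x y hu huv
  simpa [tsum_mul_left] using hbound

lemma integral_exp_neg_dirichletEigenvalue_increment_le (n : ℕ) {t ε : ℝ} (ht : 0 ≤ t)
    (hε : 0 ≤ ε) :
    ∫ s in (0 : ℝ)..t, (exp (-dirichletEigenvalue n * (t - s)) -
      exp (-dirichletEigenvalue n * (t + ε - s))) ≤ min (((n : ℝ) + 1) ^ 2)⁻¹ ε := by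
  have hL := dirichletEigenvalue_pos n
  rw [integral_exp_neg_mul_increment _ _ _ hL.ne']
  refine (one_sub_exp_neg_mul_one_sub_exp_neg_div_le hL ht hε).trans ?_
  gcongr
  exact sq_le_dirichletEigenvalue n

theorem heatKernel_time_increment_L1 :
    ∃ C : ℝ, ∀ ε : ℝ, 0 < ε → ∀ t : ℝ, 0 < t → ∀ x ∈ Set.Icc (0 : ℝ) 1,
      ∫ s in (0 : ℝ)..t, (∫ y in (0 : ℝ)..1, |G (t + ε - s) x y - G (t - s) x y|)
        ≤ C * Real.sqrt ε := by
  refine ⟨6, fun ε hε t ht x _ => ?_⟩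
  set g : ℕ → ℝ → ℝ := fun n s => 2 * (exp (-dirichletEigenvalue n * (t - s)) -
    exp (-dirichletEigenvalue n * (t + ε - s)))
  have hg_nonneg : ∀ n s, 0 ≤ g n s := fun n s =>
    mul_nonneg two_pos.le <| sub_nonneg.mpr <|
      antitone_exp_neg_dirichletEigenvalue_mul n (by linarith)
  have hg_le : ∀ n, ∫ s in Set.Ioo 0 t, g n s ≤ 2 * min (((n : ℝ) + 1) ^ 2)⁻¹ ε := fun n => by
    rw [← integral_Ioc_eq_integral_Ioo, ← intervalIntegral.integral_of_le ht.le,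
      intervalIntegral.integral_const_mul]
    gcongr
    exact integral_exp_neg_dirichletEigenvalue_increment_le n ht.le hε.le
  -- on `Ioo` rather than `Ioc`: at `s = t` the series defining `G 0` need not converge
  have hkernel : ∀ᵐ s ∂volume.restrict (Set.Ioo 0 t),
      ‖∫ y in (0 : ℝ)..1, |G (t + ε - s) x y - G (t - s) x y|‖ ≤ ∑' n, g n s := by
    filter_upwards [ae_restrict_mem measurableSet_Ioo] with s hs
    exact norm_integral_abs_G_sub_le x (sub_pos.mpr hs.2) (by linarith)
  calc ∫ s in (0 : ℝ)..t, (∫ y in (0 : ℝ)..1, |G (t + ε - s) x y - G (t - s) x y|)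
      ≤ ‖∫ s in Set.Ioo 0 t, (∫ y in (0 : ℝ)..1, |G (t + ε - s) x y - G (t - s) x y|)‖ := by
        rw [intervalIntegral.integral_of_le ht.le, integral_Ioc_eq_integral_Ioo]
        exact le_abs_self _
    _ ≤ ∑' n : ℕ, 2 * min (((n : ℝ) + 1) ^ 2)⁻¹ ε :=
        norm_integral_le_tsum_of_integral_le
          (fun n => (Continuous.integrableOn_Icc (by fun_prop)).mono_set Set.Ioo_subset_Icc_self)
          hg_nonneg hg_le ((summable_min_inv_succ_sq hε.le).mul_left 2) hkernel
    _ ≤ 6 * √ε := by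
        rw [tsum_mul_left]
        linarith [tsum_min_inv_succ_sq_le hε]
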